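/- arXiv:1911.04991 — 10 statements merged into one kernel-verified Lean document; each statement's English description precedes it below -/
import Mathlib

section
/- Let X be a set, let (X,*) and (X,∘) be racks on X with Lmlt(X,*) = Lmlt(X,∘) = G, and let X/G be a fixed complete set of representatives of the orbits of G on X. If L^*_x = L^∘_x for every x ∈ X/G, then (X,*) = (X,∘). In other words, a rack with left multiplication group G is determined by the data (G, (L_x : x ∈ X/G)). -/
/-- A rack: a binary operation with bijective left translations satisfying the left
self-distributive law. -/
structure RackStr (X : Type*) where
  op : X → X → X
  bij : ∀ x, Function.Bijective (op x)
  self_distrib : ∀ x y z, op x (op y z) = op (op x y) (op x z)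

/-- A quandle: an idempotent rack. -/
structure QuandleStr (X : Type*) extends RackStr X where
  idem : ∀ x, op x x = x

/-! Self-distributivity says `L_{x*y} = L_x L_y L_x⁻¹`, so the map `y ↦ L_y` is equivariant for
the action of `Lmlt` on `X` and by conjugation on `S_X`. Both racks have the same `Lmlt = G`,
so on each `G`-orbit their translations are the same conjugates of the common translation at
the orbit's representative. -/

namespace RackStr

variable {X : Type*}

/-- The left translation `L_x : y ↦ x * y`, as a permutation of `X`. -/
noncomputable def L (Q : RackStr X) (x : X) : Equiv.Perm X :=
  Equiv.ofBijective (Q.op x) (Q.bij x)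

/-- The left multiplication group `Lmlt(X,*) = ⟨L_x : x ∈ X⟩ ≤ S_X`. -/
noncomputable def lmlt (Q : RackStr X) : Subgroup (Equiv.Perm X) :=
  Subgroup.closure (Set.range Q.L)

end RackStr

/-- `R` is a complete set of representatives of the orbits of `G ≤ S_X` on `X`:
every `y ∈ X` lies in the orbit of a unique element of `R`. -/
def IsTransversal {X : Type*} (G : Subgroup (Equiv.Perm X)) (R : Set X) : Prop :=
  ∀ y : X, ∃! x : X, x ∈ R ∧ ∃ g ∈ G, g • y = x

/-- The stabilizer `G_x` of `x` in `G`, as a subgroup of `S_X`. -/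
def stabIn {X : Type*} (G : Subgroup (Equiv.Perm X)) (x : X) : Subgroup (Equiv.Perm X) :=
  G ⊓ MulAction.stabilizer (Equiv.Perm X) x

/-- The centralizer `C_G(G_x)` of the stabilizer `G_x` in `G`, as a subgroup of `S_X`. -/
def cgStab {X : Type*} (G : Subgroup (Equiv.Perm X)) (x : X) : Subgroup (Equiv.Perm X) :=
  G ⊓ Subgroup.centralizer (stabIn G x : Set (Equiv.Perm X))

/-- The center `Z(G_x)` of the stabilizer `G_x`, as a subgroup of `S_X`. -/
def zStab {X : Type*} (G : Subgroup (Equiv.Perm X)) (x : X) : Subgroup (Equiv.Perm X) :=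
  stabIn G x ⊓ Subgroup.centralizer (stabIn G x : Set (Equiv.Perm X))

/-- The conjugacy class `a^G = { g⁻¹ a g : g ∈ G }` of `a` under `G`
(written in left-action convention). -/
def conjClassOf {X : Type*} (G : Subgroup (Equiv.Perm X)) (a : Equiv.Perm X) :
    Set (Equiv.Perm X) :=
  {h | ∃ g ∈ G, h = g * a * g⁻¹}

namespace RackStr

variable {X : Type*} (Q : RackStr X)

lemma op_injective : Function.Injective (op : RackStr X → X → X → X) := by
  rintro ⟨_, _, _⟩ ⟨_, _, _⟩ rfl
  rfl

lemma L_op (x y : X) : Q.L (Q.op x y) = Q.L x * Q.L y * (Q.L x)⁻¹ := by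
  ext z
  obtain ⟨w, rfl⟩ := (Q.L x).surjective z
  rw [Equiv.Perm.mul_apply, Equiv.Perm.mul_apply, Equiv.Perm.coe_inv, Equiv.symm_apply_apply]
  exact Q.self_distrib x y w |>.symm

lemma L_apply_of_mem_lmlt {g : Equiv.Perm X} (hg : g ∈ Q.lmlt) (y : X) :
    Q.L (g y) = g * Q.L y * g⁻¹ := by
  induction hg using Subgroup.closure_induction generalizing y with
  | mem _ hx =>
    obtain ⟨x, rfl⟩ := hx
    exact Q.L_op x y
  | one => simp
  | mul a b _ _ ha hb =>
    rw [Equiv.Perm.mul_apply, ha, hb]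
    group
  | inv a _ ha =>
    obtain ⟨z, rfl⟩ := a.surjective y
    rw [Equiv.Perm.coe_inv, Equiv.symm_apply_apply, ha]
    group

end RackStr

/-- Lemma `Lm:ToEnvelope`, first part: a rack with left multiplication group
`G` is determined by its left translations at a complete set `R` of orbit representatives
of `G`. -/
theorem rack_determined_by_envelope {X : Type*} (G : Subgroup (Equiv.Perm X)) (R : Set X)
    (hR : IsTransversal G R) (Q Q' : RackStr X) (hQ : Q.lmlt = G) (hQ' : Q'.lmlt = G)
    (h : ∀ x ∈ R, Q.op x = Q'.op x) :
    Q = Q' := by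
  refine RackStr.op_injective (funext fun z => ?_)
  obtain ⟨x, ⟨hxR, g, hg, rfl⟩, -⟩ := hR z
  have hLx : Q.L (g z) = Q'.L (g z) := Equiv.ext (congrFun (h _ hxR))
  have hL : Q.L z = Q'.L z := by
    have hgQ : g ∈ Q.lmlt := hQ ▸ hg
    have hgQ' : g ∈ Q'.lmlt := hQ' ▸ hg
    rw [Q.L_apply_of_mem_lmlt hgQ, Q'.L_apply_of_mem_lmlt hgQ'] at hLx
    exact mul_left_cancel (mul_right_cancel hLx)
  exact funext fun w => congrArg (· w) hL
end

section
/- Let G ≤ S_X, let X/G be a fixed complete set of orbit representatives, and let Λ = (λ_x ∈ G : x ∈ X/G). For y ∈ X, say y ∈ xG with x ∈ X/G, attempt to define L_y = g⁻¹ λ_x g where g is any element of G with xg = y. This assignment is well-defined (independent of the choice of g) for all y ∈ X if and only if λ_x ∈ C_G(G_x) for every x ∈ X/G, i.e., if and only if (G,Λ) is a rack folder. -/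
/-- Proposition `Pr:Folder`(i), well-definedness: given `G ≤ S_X`, a complete
set `R` of orbit representatives and a tuple `Λ = (λ_x ∈ G : x ∈ R)`, the assignment
`L_y = g⁻¹ λ_x g` (for `y = xg`, written here in left-action convention as `g * λ_x * g⁻¹`
with `g • x = y`) is independent of the choice of `g` for all `y` if and only if
`λ_x ∈ C_G(G_x)` for every `x ∈ R`, i.e. iff `(G, Λ)` is a rack folder. -/
theorem well_defined_iff_rack_folder {X : Type*} (G : Subgroup (Equiv.Perm X)) (R : Set X)
    (hR : IsTransversal G R) (Λ : X → Equiv.Perm X) (hΛ : ∀ x ∈ R, Λ x ∈ G) :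
    (∀ x ∈ R, ∀ g ∈ G, ∀ h ∈ G, g • x = h • x → g * Λ x * g⁻¹ = h * Λ x * h⁻¹) ↔
    (∀ x ∈ R, Λ x ∈ cgStab G x) := by
  constructor
  · intro H x hx
    refine ⟨hΛ x hx, Subgroup.mem_centralizer_iff.2 ?_⟩
    intro s hs
    obtain ⟨hsG, hsx⟩ := hs
    have hsx' : s • x = (1 : Equiv.Perm X) • x := by
      simpa using hsx
    have := H x hx s hsG 1 (one_mem G) hsx'
    simp only [one_mul, inv_one, mul_one] at this
    have h1 : s * Λ x = Λ x * s := by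
      have := congrArg (· * s) this
      simpa [mul_assoc] using this
    exact h1
  · intro H x hx g hg h hh hgh
    obtain ⟨hG, hc⟩ := H x hx
    have hmem : h⁻¹ * g ∈ stabIn G x := by
      refine Subgroup.mem_inf.2 ⟨mul_mem (inv_mem hh) hg, ?_⟩
      show (h⁻¹ * g) • x = x
      rw [mul_smul, hgh, inv_smul_smul]
    have hcomm : (h⁻¹ * g) * Λ x = Λ x * (h⁻¹ * g) :=
      Subgroup.mem_centralizer_iff.1 hc _ hmem
    have : g * Λ x = h * Λ x * (h⁻¹ * g) := by
      rw [mul_assoc, ← hcomm]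
      group
    rw [this]
    group
end

section
/- Let (G, Λ) with Λ = (λ_x : x ∈ X/G) be a rack folder. Define a binary operation * on X by letting, for y ∈ xG with x ∈ X/G, the left translation be L_y = g⁻¹ λ_x g where g ∈ G satisfies xg = y. Then (X,*) is a rack, L_x = λ_x for every x ∈ X/G, and Lmlt(X,*) equals the subgroup of G generated by the union over x ∈ X/G of the conjugacy classes λ_x^G = { g⁻¹ λ_x g : g ∈ G }; in particular Lmlt(X,*) ≤ G. -/
/-!
Every `y ∈ X` is `g • x` for some `x ∈ R` and `g ∈ G`, so `L_y = g λ_x g⁻¹` lies in `G`, and the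
defining formula makes `*` equivariant: `(h • y) * (h • z) = h • (y * z)` for `h ∈ G`. Applying
this with `h = L_u ∈ G` is exactly left self-distributivity. The set of left translations is the
union of the classes `λ_x^G`, which gives the description of `Lmlt(X,*)`.
-/

open Equiv

theorem IsTransversal.exists_smul_eq {X : Type*} {G : Subgroup (Perm X)} {R : Set X}
    (hR : IsTransversal G R) (y : X) : ∃ x ∈ R, ∃ g ∈ G, g • x = y := by
  obtain ⟨x, ⟨hx, g, hg, hgy⟩, -⟩ := hR y
  exact ⟨x, hx, g⁻¹, inv_mem hg, by rw [← hgy, inv_smul_smul]⟩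

theorem cgStab_le {X : Type*} (G : Subgroup (Perm X)) (x : X) : cgStab G x ≤ G :=
  inf_le_left

theorem conjClassOf_subset {X : Type*} {G : Subgroup (Perm X)} {a : Perm X} (ha : a ∈ G) :
    conjClassOf G a ⊆ G := by
  rintro _ ⟨g, hg, rfl⟩
  exact mul_mem (mul_mem hg ha) (inv_mem hg)

theorem selfDistrib_of_smul_apply {X : Type*} {G : Subgroup (Perm X)} {op : X → X → X}
    (hmem : ∀ u, ∃ p ∈ G, ⇑p = op u) (hsmul : ∀ g ∈ G, ∀ y z, op (g • y) (g z) = g (op y z))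
    (u v w : X) : op u (op v w) = op (op u v) (op u w) := by
  obtain ⟨p, hp, hpu⟩ := hmem u
  rw [← hpu]
  exact (hsmul p hp v w).symm

section RackFolder

variable {X : Type*} {G : Subgroup (Perm X)} {R : Set X} {Λ : X → Perm X} {op : X → X → X}

theorem exists_mem_coe_eq_op (hR : IsTransversal G R) (hΛ : ∀ x ∈ R, Λ x ∈ G)
    (hop : ∀ x ∈ R, ∀ g ∈ G, ∀ z : X, op (g • x) z = (g * Λ x * g⁻¹) z) (y : X) :
    ∃ p ∈ G, ⇑p = op y := by
  obtain ⟨x, hx, g, hg, rfl⟩ := hR.exists_smul_eq y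
  exact ⟨g * Λ x * g⁻¹, mul_mem (mul_mem hg (hΛ x hx)) (inv_mem hg),
    funext fun z => (hop x hx g hg z).symm⟩

theorem op_smul_apply (hR : IsTransversal G R)
    (hop : ∀ x ∈ R, ∀ g ∈ G, ∀ z : X, op (g • x) z = (g * Λ x * g⁻¹) z)
    {h : Perm X} (hh : h ∈ G) (y z : X) : op (h • y) (h z) = h (op y z) := by
  obtain ⟨x, hx, g, hg, rfl⟩ := hR.exists_smul_eq y
  rw [smul_smul, hop x hx _ (mul_mem hh hg), hop x hx g hg]
  simp [Perm.mul_apply]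

theorem setOf_coe_eq_op (hR : IsTransversal G R)
    (hop : ∀ x ∈ R, ∀ g ∈ G, ∀ z : X, op (g • x) z = (g * Λ x * g⁻¹) z) :
    {h : Perm X | ∃ y : X, ⇑h = op y} = ⋃ x ∈ R, conjClassOf G (Λ x) := by
  ext p
  simp only [Set.mem_iUnion, conjClassOf]
  constructor
  · rintro ⟨y, hy⟩
    obtain ⟨x, hx, g, hg, rfl⟩ := hR.exists_smul_eq y
    exact ⟨x, hx, g, hg, DFunLike.coe_injective (hy.trans (funext (hop x hx g hg)))⟩
  · rintro ⟨x, hx, g, hg, rfl⟩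
    exact ⟨g • x, funext fun z => (hop x hx g hg z).symm⟩

end RackFolder

/-- Proposition `Pr:Folder`(i): if `(G, Λ)` is a rack folder and `*` is the
operation on `X` whose left translations are `L_{g•x} = g * λ_x * g⁻¹` (`x ∈ R`, `g ∈ G`),
then `(X,*)` is a rack, `L_x = λ_x` for every `x ∈ R`, and
`Lmlt(X,*) = ⟨⋃_{x ∈ R} λ_x^G⟩ ≤ G`. -/
theorem rack_folder_gives_rack {X : Type*} (G : Subgroup (Equiv.Perm X)) (R : Set X)
    (hR : IsTransversal G R) (Λ : X → Equiv.Perm X) (hΛ : ∀ x ∈ R, Λ x ∈ cgStab G x)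
    (op : X → X → X)
    (hop : ∀ x ∈ R, ∀ g ∈ G, ∀ z : X, op (g • x) z = (g * Λ x * g⁻¹) z) :
    (∀ y : X, Function.Bijective (op y)) ∧
    (∀ u v w : X, op u (op v w) = op (op u v) (op u w)) ∧
    (∀ x ∈ R, ∀ y : X, op x y = Λ x y) ∧
    Subgroup.closure {h : Equiv.Perm X | ∃ y : X, ⇑h = op y} =
      Subgroup.closure (⋃ x ∈ R, conjClassOf G (Λ x)) ∧
    Subgroup.closure {h : Equiv.Perm X | ∃ y : X, ⇑h = op y} ≤ G := by
  have hΛG : ∀ x ∈ R, Λ x ∈ G := fun x hx => cgStab_le G x (hΛ x hx)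
  have hmem := exists_mem_coe_eq_op hR hΛG hop
  have htrans := setOf_coe_eq_op hR hop
  refine ⟨fun y => ?_, selfDistrib_of_smul_apply hmem fun g hg => op_smul_apply hR hop hg,
    fun x hx y => by simpa using hop x hx 1 G.one_mem y, by rw [htrans], ?_⟩
  · obtain ⟨p, -, hp⟩ := hmem y
    exact hp ▸ p.bijective
  · rw [htrans, Subgroup.closure_le]
    exact Set.iUnion₂_subset fun x hx => conjClassOf_subset (hΛG x hx)
end

section
/- Let G ≤ S_X and Λ = (λ_x ∈ G : x ∈ X/G), and suppose the operation * on X defined by L_y = g⁻¹ λ_x g (for y ∈ xG, g ∈ G with xg = y) is well-defined. Then (X,*) is a quandle if and only if λ_x ∈ Z(G_x) for every x ∈ X/G, i.e., if and only if (G,Λ) is a quandle folder. -/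
/-- Proposition `Pr:Folder`(ii): given `G ≤ S_X`, orbit representatives `R`,
a tuple `Λ = (λ_x ∈ G : x ∈ R)` and a well-defined operation `*` on `X` with left
translations `L_{g•x} = g * λ_x * g⁻¹`, the groupoid `(X,*)` is a quandle if and only if
`λ_x ∈ Z(G_x)` for every `x ∈ R`, i.e. iff `(G, Λ)` is a quandle folder. -/
theorem quandle_iff_quandle_folder {X : Type*} (G : Subgroup (Equiv.Perm X)) (R : Set X)
    (hR : IsTransversal G R) (Λ : X → Equiv.Perm X) (hΛ : ∀ x ∈ R, Λ x ∈ G)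
    (op : X → X → X)
    (hop : ∀ x ∈ R, ∀ g ∈ G, ∀ z : X, op (g • x) z = (g * Λ x * g⁻¹) z) :
    ((∀ y : X, Function.Bijective (op y)) ∧
     (∀ u v w : X, op u (op v w) = op (op u v) (op u w)) ∧
     (∀ y : X, op y y = y)) ↔
    (∀ x ∈ R, Λ x ∈ zStab G x) := by
  constructor
  · rintro ⟨hbij, hsd, hid⟩ x hx
    have h1 : ∀ z, op x z = Λ x z := by
      intro z
      have := hop x hx 1 G.one_mem z
      simpa using this
    have hfix : Λ x x = x := by
      have := h1 x
      rw [hid x] at this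
      exact this.symm
    refine ⟨⟨hΛ x hx, ?_⟩, ?_⟩
    · simpa [MulAction.mem_stabilizer_iff, Equiv.Perm.smul_def] using hfix
    · intro h hh
      obtain ⟨hG, hstab⟩ := hh
      have hhx : h • x = x := hstab
      have heq : Λ x = h * Λ x * h⁻¹ := by
        ext z
        have e1 := hop x hx h hG z
        rw [hhx, h1 z] at e1
        exact e1
      conv_rhs => rw [heq]
      group
  · intro hZ
    have key : ∀ y : X, ∃ x ∈ R, ∃ g ∈ G, g x = y ∧ ∀ z, op y z = (g * Λ x * g⁻¹) z := by
      intro y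
      obtain ⟨x, ⟨hxR, g, hg, hgy⟩, _⟩ := hR y
      have hinv : (g⁻¹ : Equiv.Perm X) • x = y := by
        rw [← hgy]; simp [Equiv.Perm.smul_def]
      refine ⟨x, hxR, g⁻¹, G.inv_mem hg, ?_, ?_⟩
      · simpa [Equiv.Perm.smul_def] using hinv
      · intro z
        have := hop x hxR g⁻¹ (G.inv_mem hg) z
        rwa [hinv] at this
    have keyfix : ∀ x ∈ R, Λ x x = x := by
      intro x hx
      have := (hZ x hx).1.2
      simpa [MulAction.mem_stabilizer_iff, Equiv.Perm.smul_def] using this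
    refine ⟨?_, ?_, ?_⟩
    · intro y
      obtain ⟨x, hx, g, hg, hgy, hy⟩ := key y
      have : op y = ⇑(g * Λ x * g⁻¹) := funext hy
      rw [this]
      exact (g * Λ x * g⁻¹).bijective
    · intro u v w
      obtain ⟨x, hx, g, hg, hgu, hu⟩ := key u
      obtain ⟨x', hx', h, hh, hhv, hv⟩ := key v
      set a : Equiv.Perm X := g * Λ x * g⁻¹ with ha
      have haG : a ∈ G := G.mul_mem (G.mul_mem hg (hΛ x hx)) (G.inv_mem hg)
      have houv : op u v = (a * h) x' := by
        rw [hu v, ← hhv]; simp [Equiv.Perm.mul_apply]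
      have hsmul : (a * h) • x' = op u v := by
        rw [houv]; rfl
      have e2 := hop x' hx' (a * h) (G.mul_mem haG hh) (a w)
      rw [hsmul] at e2
      rw [hu (op v w), hv w, hu w, e2]
      simp [Equiv.Perm.mul_apply]
    · intro y
      obtain ⟨x, hx, g, hg, hgy, hy⟩ := key y
      rw [hy y, ← hgy]
      simp [Equiv.Perm.mul_apply, keyfix x hx]
end

section
/- Let X be a nonempty set and G ≤ S_X. There is a one-to-one correspondence between racks (X,*) satisfying Lmlt(X,*) = G and rack envelopes (G, Λ): the rack (X,*) corresponds to the envelope (G, (L_x : x ∈ X/G)), and the envelope (G, (λ_x : x ∈ X/G)) corresponds to the rack whose left translations are given by L_y = g⁻¹ λ_x g for y ∈ xG, g ∈ G with xg = y; these two assignments are mutually inverse. -/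
/-- A rack envelope over `G` (with orbit representatives `R`): a tuple
`(λ_x ∈ C_G(G_x) : x ∈ R)` such that `⟨⋃_{x ∈ R} λ_x^G⟩ = G`. -/
def IsRackEnvelope {X : Type*} (G : Subgroup (Equiv.Perm X)) (R : Set X)
    (Λ : R → Equiv.Perm X) : Prop :=
  (∀ x : R, Λ x ∈ cgStab G (x : X)) ∧
  Subgroup.closure (⋃ x : R, conjClassOf G (Λ x)) = G

/-!
Every left translation is a rack automorphism, so every `f ∈ Lmlt(X,*)` satisfies
`f L_y f⁻¹ = L_{f y}`. Hence `L` is `G`-equivariant, is determined by its values on orbit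
representatives, and `L_x` commutes with `G_x`. Conversely, for `λ_x ∈ C_G(G_x)` the permutation
`g λ_x g⁻¹` depends only on `g • x`, so `L_{g • x} := g λ_x g⁻¹` is a well-defined equivariant
map; equivariance is exactly self-distributivity, and the generation condition on the envelope
is exactly `Lmlt(X,*) = G`.
-/

section

open Equiv

variable {X : Type*}

namespace IsTransversal

variable {G : Subgroup (Perm X)} {R : Set X}

lemma exists_smul_eq_s11 (hR : IsTransversal G R) (y : X) : ∃ x : R, ∃ g ∈ G, g • (x : X) = y := by
  obtain ⟨_, ⟨hx, g, hg, rfl⟩, -⟩ := hR y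
  exact ⟨⟨_, hx⟩, g⁻¹, inv_mem hg, inv_smul_smul g y⟩

end IsTransversal

namespace RackStr

lemma ext_of_L {Q Q' : RackStr X} (h : Q.L = Q'.L) : Q = Q' := by
  obtain ⟨op, _, _⟩ := Q
  obtain ⟨op', _, _⟩ := Q'
  obtain rfl : op = op' := funext fun x => funext fun y => Equiv.ext_iff.mp (congrFun h x) y
  rfl

lemma L_mem_lmlt (Q : RackStr X) (x : X) : Q.L x ∈ Q.lmlt :=
  Subgroup.subset_closure ⟨x, rfl⟩

def aut (Q : RackStr X) : Subgroup (Perm X) where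
  carrier := {f | ∀ y z, f (Q.op y z) = Q.op (f y) (f z)}
  one_mem' _ _ := rfl
  mul_mem' {a b} ha hb y z := by
    rw [Perm.mul_apply, hb, ha]; rfl
  inv_mem' {a} ha y z := a.injective <| by
    rw [ha (a⁻¹ y)]; simp

lemma L_mem_aut (Q : RackStr X) (x : X) : Q.L x ∈ Q.aut :=
  Q.self_distrib x

lemma lmlt_le_aut (Q : RackStr X) : Q.lmlt ≤ Q.aut :=
  (Subgroup.closure_le _).mpr <| Set.range_subset_iff.mpr Q.L_mem_aut

lemma mul_L_mul_inv {Q : RackStr X} {f : Perm X} (hf : f ∈ Q.lmlt) (y : X) :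
    f * Q.L y * f⁻¹ = Q.L (f • y) := by
  ext z
  simpa [L] using Q.lmlt_le_aut hf y (f⁻¹ z)

lemma L_mem_cgStab (Q : RackStr X) (x : X) : Q.L x ∈ cgStab Q.lmlt x := by
  refine ⟨Q.L_mem_lmlt x, fun s ⟨hs, hsx⟩ => ?_⟩
  have hconj := mul_L_mul_inv hs x
  rw [MulAction.mem_stabilizer_iff.mp hsx] at hconj
  exact mul_inv_eq_iff_eq_mul.mp hconj

lemma iUnion_conjClassOf_L (Q : RackStr X) {R : Set X} (hR : IsTransversal Q.lmlt R) :
    ⋃ x : R, conjClassOf Q.lmlt (Q.L x) = Set.range Q.L := by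
  ext h
  simp only [Set.mem_iUnion, conjClassOf, Set.mem_ofPred_eq, Set.mem_range]
  constructor
  · rintro ⟨x, g, hg, rfl⟩
    exact ⟨g • (x : X), (mul_L_mul_inv hg x).symm⟩
  · rintro ⟨y, rfl⟩
    obtain ⟨x, g, hg, rfl⟩ := hR.exists_smul_eq_s11 y
    exact ⟨x, g, hg, (mul_L_mul_inv hg x).symm⟩

lemma isRackEnvelope_L {Q : RackStr X} {G : Subgroup (Perm X)} (hQ : Q.lmlt = G) {R : Set X}
    (hR : IsTransversal G R) : IsRackEnvelope G R (fun x : R => Q.L x) := by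
  subst hQ
  exact ⟨fun x => Q.L_mem_cgStab x, by rw [Q.iUnion_conjClassOf_L hR, lmlt]⟩

end RackStr

lemma conj_eq_conj_of_smul_eq {G : Subgroup (Perm X)} {x : X} {l g h : Perm X}
    (hl : l ∈ cgStab G x) (hg : g ∈ G) (hh : h ∈ G) (hgh : g • x = h • x) :
    g * l * g⁻¹ = h * l * h⁻¹ := by
  have hstab : h⁻¹ * g ∈ stabIn G x := Subgroup.mem_inf.mpr
    ⟨mul_mem (inv_mem hh) hg, by rw [MulAction.mem_stabilizer_iff, mul_smul, hgh, inv_smul_smul]⟩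
  have hcomm : h⁻¹ * g * l = l * (h⁻¹ * g) :=
    Subgroup.mem_centralizer_iff.mp hl.2 _ hstab
  calc g * l * g⁻¹ = h * (h⁻¹ * g * l) * g⁻¹ := by group
    _ = h * l * h⁻¹ := by rw [hcomm]; group

namespace IsTransversal

variable {G : Subgroup (Perm X)} {R : Set X} (hR : IsTransversal G R)

noncomputable def rep (y : X) : R :=
  ⟨(hR y).exists.choose, (hR y).exists.choose_spec.1⟩

noncomputable def toRep (y : X) : Perm X :=
  (hR y).exists.choose_spec.2.choose

lemma toRep_mem (y : X) : hR.toRep y ∈ G :=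
  (hR y).exists.choose_spec.2.choose_spec.1

lemma toRep_smul (y : X) : hR.toRep y • y = hR.rep y :=
  (hR y).exists.choose_spec.2.choose_spec.2

lemma rep_smul (x : R) {g : Perm X} (hg : g ∈ G) : hR.rep (g • (x : X)) = x :=
  Subtype.ext <| (hR _).unique ⟨(hR.rep _).2, hR.toRep _, hR.toRep_mem _, hR.toRep_smul _⟩
    ⟨x.2, g⁻¹, inv_mem hg, inv_smul_smul g _⟩

noncomputable def envelopeL (Λ : R → Perm X) (y : X) : Perm X :=
  (hR.toRep y)⁻¹ * Λ (hR.rep y) * hR.toRep y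

variable {Λ : R → Perm X}

lemma envelopeL_smul (hΛ : ∀ x : R, Λ x ∈ cgStab G x) (x : R) {g : Perm X} (hg : g ∈ G) :
    hR.envelopeL Λ (g • (x : X)) = g * Λ x * g⁻¹ := by
  have hk : hR.toRep (g • (x : X)) • g • (x : X) = x := by
    rw [hR.toRep_smul, hR.rep_smul x hg]
  have hconj := conj_eq_conj_of_smul_eq (hΛ x) (inv_mem (hR.toRep_mem _)) hg
    (inv_smul_eq_iff.mpr hk.symm)
  rw [inv_inv] at hconj
  rw [envelopeL, hR.rep_smul x hg, hconj]

lemma envelopeL_coe (hΛ : ∀ x : R, Λ x ∈ cgStab G x) (x : R) : hR.envelopeL Λ x = Λ x := by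
  simpa using hR.envelopeL_smul hΛ x (one_mem G)

lemma envelopeL_mem (hΛ : ∀ x : R, Λ x ∈ cgStab G x) (y : X) : hR.envelopeL Λ y ∈ G :=
  mul_mem (mul_mem (inv_mem (hR.toRep_mem y)) (hΛ _).1) (hR.toRep_mem y)

lemma eq_envelopeL (hΛ : ∀ x : R, Λ x ∈ cgStab G x) {F : X → Perm X}
    (hF : ∀ x : R, ∀ g ∈ G, F (g • (x : X)) = g * Λ x * g⁻¹) : F = hR.envelopeL Λ := by
  funext y
  obtain ⟨x, g, hg, rfl⟩ := hR.exists_smul_eq_s11 y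
  rw [hF x g hg, hR.envelopeL_smul hΛ x hg]

lemma envelopeL_smul_eq_conj (hΛ : ∀ x : R, Λ x ∈ cgStab G x) {h : Perm X} (hh : h ∈ G)
    (y : X) :
    hR.envelopeL Λ (h • y) = h * hR.envelopeL Λ y * h⁻¹ := by
  obtain ⟨x, g, hg, rfl⟩ := hR.exists_smul_eq_s11 y
  rw [smul_smul, hR.envelopeL_smul hΛ x (mul_mem hh hg), hR.envelopeL_smul hΛ x hg]
  group

noncomputable def rackOfEnvelope (hΛ : ∀ x : R, Λ x ∈ cgStab G x) : RackStr X where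
  op y := hR.envelopeL Λ y
  bij y := (hR.envelopeL Λ y).bijective
  self_distrib y z w := by
    show _ = hR.envelopeL Λ (hR.envelopeL Λ y • z) _
    rw [hR.envelopeL_smul_eq_conj hΛ (hR.envelopeL_mem hΛ y) z]
    simp

lemma rackOfEnvelope_L (hΛ : ∀ x : R, Λ x ∈ cgStab G x) :
    (hR.rackOfEnvelope hΛ).L = hR.envelopeL Λ := by
  funext y; ext z; rfl

lemma lmlt_rackOfEnvelope (hΛ : ∀ x : R, Λ x ∈ cgStab G x)
    (hgen : Subgroup.closure (⋃ x : R, conjClassOf G (Λ x)) = G) :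
    (hR.rackOfEnvelope hΛ).lmlt = G := by
  refine le_antisymm ((Subgroup.closure_le _).mpr ?_)
    (hgen.symm.trans_le ((Subgroup.closure_le _).mpr ?_))
  · rintro _ ⟨y, rfl⟩
    rw [rackOfEnvelope_L]
    exact hR.envelopeL_mem hΛ y
  · simp only [Set.iUnion_subset_iff, conjClassOf]
    rintro x _ ⟨g, hg, rfl⟩
    rw [← hR.envelopeL_smul hΛ x hg, ← rackOfEnvelope_L hR hΛ]
    exact RackStr.L_mem_lmlt _ _

end IsTransversal

end

theorem rack_envelope_correspondence_general {X : Type*}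
    (G : Subgroup (Equiv.Perm X)) (R : Set X) (hR : IsTransversal G R) :
    ∃ e : {Q : RackStr X // Q.lmlt = G} ≃ {Λ : R → Equiv.Perm X // IsRackEnvelope G R Λ},
      (∀ Q : {Q : RackStr X // Q.lmlt = G}, ∀ x : R, ∀ y : X,
        ((e Q : R → Equiv.Perm X) x) y = Q.val.op (x : X) y) ∧
      (∀ Λ : {Λ : R → Equiv.Perm X // IsRackEnvelope G R Λ}, ∀ x : R, ∀ g ∈ G, ∀ z : X,
        (e.symm Λ).val.op (g • (x : X)) z = (g * (Λ : R → Equiv.Perm X) x * g⁻¹) z) := by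
  refine ⟨
    { toFun := fun Q => ⟨fun x => Q.1.L x, RackStr.isRackEnvelope_L Q.2 hR⟩
      invFun := fun Λ => ⟨hR.rackOfEnvelope Λ.2.1, hR.lmlt_rackOfEnvelope Λ.2.1 Λ.2.2⟩
      left_inv := ?_
      right_inv := ?_ },
    fun _ _ _ => rfl, fun Λ x g hg z => DFunLike.congr_fun (hR.envelopeL_smul Λ.2.1 x hg) z⟩
  · rintro ⟨Q, rfl⟩
    have hΛ : ∀ x : R, Q.L x ∈ cgStab Q.lmlt x := (Q.L_mem_cgStab ·)
    refine Subtype.ext <| RackStr.ext_of_L <| (hR.rackOfEnvelope_L hΛ).trans ?_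
    exact (hR.eq_envelopeL hΛ fun x g hg => (RackStr.mul_L_mul_inv hg x).symm).symm
  · rintro ⟨Λ, hΛ, -⟩
    exact Subtype.ext <| funext fun x =>
      (congrFun (hR.rackOfEnvelope_L hΛ) x).trans (hR.envelopeL_coe hΛ x)

/-- Theorem `Th:Correspondence`, rack case: for a nonempty `X` and `G ≤ S_X`
there is a one-to-one correspondence between racks `(X,*)` with `Lmlt(X,*) = G` and rack
envelopes `(G,Λ)`; the rack `(X,*)` corresponds to `(G, (L_x : x ∈ R))`, and the envelope
`(G, (λ_x : x ∈ R))` corresponds to the rack with `L_{g•x} = g * λ_x * g⁻¹`; these two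
assignments are mutually inverse. -/
theorem rack_envelope_correspondence {X : Type*} [Nonempty X]
    (G : Subgroup (Equiv.Perm X)) (R : Set X) (hR : IsTransversal G R) :
    ∃ e : {Q : RackStr X // Q.lmlt = G} ≃ {Λ : R → Equiv.Perm X // IsRackEnvelope G R Λ},
      (∀ Q : {Q : RackStr X // Q.lmlt = G}, ∀ x : R, ∀ y : X,
        ((e Q : R → Equiv.Perm X) x) y = Q.val.op (x : X) y) ∧
      (∀ Λ : {Λ : R → Equiv.Perm X // IsRackEnvelope G R Λ}, ∀ x : R, ∀ g ∈ G, ∀ z : X,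
        (e.symm Λ).val.op (g • (x : X)) z = (g * (Λ : R → Equiv.Perm X) x * g⁻¹) z) :=
  rack_envelope_correspondence_general G R hR
end

section
/- Let X be a nonempty set and G ≤ S_X. There is a one-to-one correspondence between quandles (X,*) satisfying Lmlt(X,*) = G and quandle envelopes (G, Λ): the quandle (X,*) corresponds to the envelope (G, (L_x : x ∈ X/G)), and the envelope (G, (λ_x : x ∈ X/G)) corresponds to the quandle whose left translations are given by L_y = g⁻¹ λ_x g for y ∈ xG, g ∈ G with xg = y; these two assignments are mutually inverse. -/
/-- A quandle envelope over `G` (with orbit representatives `R`): a tuple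
`(λ_x ∈ Z(G_x) : x ∈ R)` such that `⟨⋃_{x ∈ R} λ_x^G⟩ = G`. -/
def IsQuandleEnvelope {X : Type*} (G : Subgroup (Equiv.Perm X)) (R : Set X)
    (Λ : R → Equiv.Perm X) : Prop :=
  (∀ x : R, Λ x ∈ zStab G (x : X)) ∧
  Subgroup.closure (⋃ x : R, conjClassOf G (Λ x)) = G

-- ===== auxiliary development =====
section Aux
variable {X : Type*} (G : Subgroup (Equiv.Perm X)) (R : Set X) (hR : IsTransversal G R)

noncomputable def repE (y : X) : X := (hR y).choose

lemma repE_mem (y : X) : repE G R hR y ∈ R := ((hR y).choose_spec.1).1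
lemma repE_ex (y : X) : ∃ g ∈ G, g • y = repE G R hR y := ((hR y).choose_spec.1).2

noncomputable def gE (y : X) : Equiv.Perm X := (repE_ex G R hR y).choose
lemma gE_mem (y : X) : gE G R hR y ∈ G := (repE_ex G R hR y).choose_spec.1
lemma gE_smul (y : X) : gE G R hR y • y = repE G R hR y := (repE_ex G R hR y).choose_spec.2

noncomputable def ell (Λ : R → Equiv.Perm X) (y : X) : Equiv.Perm X :=
  (gE G R hR y)⁻¹ * Λ ⟨repE G R hR y, repE_mem G R hR y⟩ * gE G R hR y

variable {Λ : R → Equiv.Perm X} (hZ : ∀ x : R, Λ x ∈ zStab G (x : X))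

include hZ in
lemma ell_smul (x : R) (g : Equiv.Perm X) (hg : g ∈ G) :
    ell G R hR Λ (g • (x : X)) = g * Λ x * g⁻¹ := by
  set y := g • (x : X) with hy
  set h := gE G R hR y with hh
  have hhmem : h ∈ G := gE_mem G R hR y
  have hhy : h • y = repE G R hR y := gE_smul G R hR y
  have hrx : (x : X) = repE G R hR y := by
    refine (hR (x : X)).unique ⟨x.2, 1, G.one_mem, one_smul _ _⟩
      ⟨repE_mem G R hR y, h * g, mul_mem hhmem hg, ?_⟩
    rw [mul_smul, ← hy, hhy]
  have hstab : h * g ∈ stabIn G (x : X) := by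
    refine ⟨mul_mem hhmem hg, MulAction.mem_stabilizer_iff.mpr ?_⟩
    rw [mul_smul, ← hy, hhy, ← hrx]
  have hcomm : (h * g) * Λ x = Λ x * (h * g) :=
    Subgroup.mem_centralizer_iff.mp (hZ x).2 _ hstab
  have hΛeq : Λ ⟨repE G R hR y, repE_mem G R hR y⟩ = Λ x := by
    congr 1
    exact Subtype.ext hrx.symm
  rw [ell, hΛeq, ← hh]
  calc h⁻¹ * Λ x * h = h⁻¹ * (Λ x * (h * g)) * g⁻¹ := by group
    _ = h⁻¹ * (h * g * Λ x) * g⁻¹ := by rw [hcomm]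
    _ = g * Λ x * g⁻¹ := by group

lemma ell_mem (y : X) : ell G R hR Λ y ∈ G → True := fun _ => trivial

include hZ in
lemma ell_mem_G (y : X) : ell G R hR Λ y ∈ G := by
  have hΛ : Λ ⟨repE G R hR y, repE_mem G R hR y⟩ ∈ G :=
    (hZ ⟨repE G R hR y, repE_mem G R hR y⟩).1.1
  exact mul_mem (mul_mem (inv_mem (gE_mem G R hR y)) hΛ) (gE_mem G R hR y)

lemma y_eq (y : X) : ((gE G R hR y)⁻¹ • repE G R hR y) = y := by
  rw [← gE_smul G R hR y, inv_smul_smul]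

include hZ in
lemma ell_conj (h : Equiv.Perm X) (hh : h ∈ G) (y : X) :
    ell G R hR Λ (h • y) = h * ell G R hR Λ y * h⁻¹ := by
  conv_lhs => rw [← y_eq G R hR y]
  rw [← mul_smul, ell_smul G R hR hZ ⟨repE G R hR y, repE_mem G R hR y⟩ _
    (mul_mem hh (inv_mem (gE_mem G R hR y)))]
  conv_rhs => rw [← y_eq G R hR y,
    ell_smul G R hR hZ ⟨repE G R hR y, repE_mem G R hR y⟩ _ (inv_mem (gE_mem G R hR y))]
  group

include hZ in
noncomputable def envQuandle : QuandleStr X where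
  op y z := ell G R hR Λ y z
  bij y := (ell G R hR Λ y).bijective
  self_distrib a b c := by
    have key : ell G R hR Λ (ell G R hR Λ a b) =
        ell G R hR Λ a * ell G R hR Λ b * (ell G R hR Λ a)⁻¹ := by
      have : ell G R hR Λ a b = ell G R hR Λ a • b := rfl
      rw [this, ell_conj G R hR hZ _ (ell_mem_G G R hR hZ a)]
    show ell G R hR Λ a (ell G R hR Λ b c) = ell G R hR Λ (ell G R hR Λ a b) (ell G R hR Λ a c)
    rw [key]
    simp [Equiv.Perm.mul_apply]
  idem y := by
    show ell G R hR Λ y y = y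
    have hg : gE G R hR y y = repE G R hR y := gE_smul G R hR y
    have hst : Λ ⟨repE G R hR y, repE_mem G R hR y⟩ (repE G R hR y) = repE G R hR y :=
      (hZ ⟨repE G R hR y, repE_mem G R hR y⟩).1.2
    simp only [ell, Equiv.Perm.mul_apply, hg, hst]
    have h3 := y_eq G R hR y
    simpa [Equiv.Perm.smul_def] using h3

include hZ in
lemma envQuandle_L (y : X) : (envQuandle G R hR hZ).toRackStr.L y = ell G R hR Λ y :=
  Equiv.ext fun _ => rfl

include hZ in
lemma range_ell : Set.range (ell G R hR Λ) = ⋃ x : R, conjClassOf G (Λ x) := by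
  ext p
  constructor
  · rintro ⟨y, rfl⟩
    refine Set.mem_iUnion.2 ⟨⟨repE G R hR y, repE_mem G R hR y⟩,
      (gE G R hR y)⁻¹, inv_mem (gE_mem G R hR y), ?_⟩
    rw [ell, inv_inv]
  · intro hp
    obtain ⟨x, g, hg, rfl⟩ := Set.mem_iUnion.1 hp
    exact ⟨g • (x : X), ell_smul G R hR hZ x g hg⟩

include hZ in
lemma envQuandle_lmlt (hcl : Subgroup.closure (⋃ x : R, conjClassOf G (Λ x)) = G) :
    (envQuandle G R hR hZ).toRackStr.lmlt = G := by
  have : Set.range (envQuandle G R hR hZ).toRackStr.L = Set.range (ell G R hR Λ) := by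
    ext p; constructor
    · rintro ⟨y, rfl⟩; exact ⟨y, (envQuandle_L G R hR hZ y).symm⟩
    · rintro ⟨y, rfl⟩; exact ⟨y, envQuandle_L G R hR hZ y⟩
  rw [RackStr.lmlt, this, range_ell G R hR hZ, hcl]

end Aux

-- ===== forward direction lemmas =====
section Fwd
variable {X : Type*}

lemma QuandleStr.ext' {Q1 Q2 : QuandleStr X} (h : Q1.op = Q2.op) : Q1 = Q2 := by
  obtain ⟨⟨op1, b1, s1⟩, i1⟩ := Q1
  obtain ⟨⟨op2, b2, s2⟩, i2⟩ := Q2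
  have : op1 = op2 := h
  subst this
  rfl

lemma L_mem_lmlt (Q : QuandleStr X) (y : X) : Q.toRackStr.L y ∈ Q.toRackStr.lmlt :=
  Subgroup.subset_closure ⟨y, rfl⟩

lemma lmlt_conj (Q : QuandleStr X) :
    ∀ h ∈ Q.toRackStr.lmlt, ∀ y : X,
      h * Q.toRackStr.L y * h⁻¹ = Q.toRackStr.L (h • y) := by
  have hd : ∀ a y, Q.toRackStr.L a * Q.toRackStr.L y =
      Q.toRackStr.L (Q.op a y) * Q.toRackStr.L a :=
    fun a y => Equiv.ext fun z => Q.self_distrib a y z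
  intro h hh
  induction hh using Subgroup.closure_induction with
  | mem a ha =>
    obtain ⟨a, rfl⟩ := ha
    intro y
    rw [mul_inv_eq_iff_eq_mul]
    have : Q.toRackStr.L a • y = Q.op a y := rfl
    rw [this]
    exact hd a y
  | one => intro y; simp
  | mul a b _ _ iha ihb =>
    intro y
    have : a * b * Q.toRackStr.L y * (a * b)⁻¹ =
        a * (b * Q.toRackStr.L y * b⁻¹) * a⁻¹ := by group
    rw [this, ihb y, iha (b • y), mul_smul]
  | inv a ha iha =>
    intro y
    have h1 := iha (a⁻¹ • y)
    rw [smul_inv_smul] at h1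
    rw [← h1]
    group

end Fwd


/-- Theorem `Th:Correspondence`, quandle case: for a nonempty `X` and
`G ≤ S_X` there is a one-to-one correspondence between quandles `(X,*)` with
`Lmlt(X,*) = G` and quandle envelopes `(G,Λ)`; the quandle `(X,*)` corresponds to
`(G, (L_x : x ∈ R))`, and the envelope `(G, (λ_x : x ∈ R))` corresponds to the quandle with
`L_{g•x} = g * λ_x * g⁻¹`; these two assignments are mutually inverse. -/
theorem quandle_envelope_correspondence {X : Type*} [Nonempty X]
    (G : Subgroup (Equiv.Perm X)) (R : Set X) (hR : IsTransversal G R) :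
    ∃ e : {Q : QuandleStr X // Q.toRackStr.lmlt = G} ≃
        {Λ : R → Equiv.Perm X // IsQuandleEnvelope G R Λ},
      (∀ Q : {Q : QuandleStr X // Q.toRackStr.lmlt = G}, ∀ x : R, ∀ y : X,
        ((e Q : R → Equiv.Perm X) x) y = Q.val.op (x : X) y) ∧
      (∀ Λ : {Λ : R → Equiv.Perm X // IsQuandleEnvelope G R Λ}, ∀ x : R, ∀ g ∈ G, ∀ z : X,
        (e.symm Λ).val.op (g • (x : X)) z = (g * (Λ : R → Equiv.Perm X) x * g⁻¹) z) := by
  -- forward map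
  have fwd : ∀ Q : {Q : QuandleStr X // Q.toRackStr.lmlt = G},
      IsQuandleEnvelope G R (fun x : R => Q.val.toRackStr.L (x : X)) := by
    rintro ⟨Q, hG⟩
    constructor
    · intro x
      refine ⟨⟨hG ▸ L_mem_lmlt Q x, MulAction.mem_stabilizer_iff.mpr (Q.idem x)⟩,
        Subgroup.mem_centralizer_iff.mpr ?_⟩
      intro s hs
      have hsG : s ∈ Q.toRackStr.lmlt := hG ▸ hs.1
      have hsx : s • (x : X) = (x : X) := hs.2
      have hc := lmlt_conj Q s hsG (x : X)
      rw [hsx] at hc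
      exact mul_inv_eq_iff_eq_mul.mp hc
    · apply le_antisymm
      · rw [Subgroup.closure_le]
        rintro p hp
        obtain ⟨x, g, hg, rfl⟩ := Set.mem_iUnion.1 hp
        exact mul_mem (mul_mem hg (hG ▸ L_mem_lmlt Q x)) (inv_mem hg)
      · have h2 : Set.range Q.toRackStr.L ⊆
            ↑(Subgroup.closure (⋃ x : R, conjClassOf G
              ((fun x : R => Q.toRackStr.L (x : X)) x))) := by
          rintro p ⟨y, rfl⟩
          obtain ⟨g, hg, hgy⟩ := repE_ex G R hR y
          have hgl : g⁻¹ ∈ Q.toRackStr.lmlt := hG ▸ inv_mem hg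
          have hc := lmlt_conj Q g⁻¹ hgl (repE G R hR y)
          have hy : g⁻¹ • repE G R hR y = y := by rw [← hgy, inv_smul_smul]
          rw [hy] at hc
          apply Subgroup.subset_closure
          refine Set.mem_iUnion.2 ⟨⟨repE G R hR y, repE_mem G R hR y⟩, g⁻¹, inv_mem hg, ?_⟩
          rw [← hc, inv_inv]
        calc G = Q.toRackStr.lmlt := hG.symm
          _ ≤ _ := (Subgroup.closure_le _).mpr h2
  refine ⟨{
    toFun := fun Q => ⟨fun x : R => Q.val.toRackStr.L (x : X), fwd Q⟩
    invFun := fun Λ => ⟨envQuandle G R hR Λ.2.1, envQuandle_lmlt G R hR Λ.2.1 Λ.2.2⟩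
    left_inv := ?_
    right_inv := ?_ }, ?_, ?_⟩
  · rintro ⟨Q, hG⟩
    apply Subtype.ext
    apply QuandleStr.ext'
    funext y z
    show ell G R hR (fun x : R => Q.toRackStr.L (x : X)) y z = Q.op y z
    set Λ := fun x : R => Q.toRackStr.L (x : X) with hΛ
    have hZ : ∀ x : R, Λ x ∈ zStab G (x : X) := (fwd ⟨Q, hG⟩).1
    have hy : y = (gE G R hR y)⁻¹ • repE G R hR y := (y_eq G R hR y).symm
    have : ell G R hR Λ y = Q.toRackStr.L y := by
      conv_lhs => rw [hy, ell_smul G R hR hZ ⟨repE G R hR y, repE_mem G R hR y⟩ _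
        (inv_mem (gE_mem G R hR y))]
      have hmem : (gE G R hR y)⁻¹ ∈ Q.toRackStr.lmlt := by
        rw [hG]; exact inv_mem (gE_mem G R hR y)
      have hc := lmlt_conj Q (gE G R hR y)⁻¹ hmem (repE G R hR y)
      rw [← hy] at hc
      rw [← hc, hΛ]
    rw [this]; rfl
  · rintro ⟨Λ, hE⟩
    apply Subtype.ext
    funext x
    show (envQuandle G R hR hE.1).toRackStr.L (x : X) = Λ x
    rw [envQuandle_L G R hR hE.1]
    have h1 : (x : X) = (1 : Equiv.Perm X) • (x : X) := (one_smul _ _).symm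
    conv_lhs => rw [h1, ell_smul G R hR hE.1 x 1 G.one_mem]
    group
  · rintro ⟨Q, hG⟩ x y
    rfl
  · rintro ⟨Λ, hE⟩ x g hg z
    show ell G R hR Λ (g • (x : X)) z = (g * Λ x * g⁻¹) z
    rw [ell_smul G R hR hE.1 x g hg]
end

section
/- Let (G, (λ_x : x ∈ X/G)) and (G, (κ_x : x ∈ X/G)) be rack envelopes, and for every x ∈ X/G and y ∈ xG fix g_y ∈ G with x g_y = y. Then the racks corresponding to the two envelopes are isomorphic if and only if there is f ∈ N_{S_X}(G) such that for every x ∈ X/G, with y = xf⁻¹, one has κ_x = f⁻¹ (g_y⁻¹ λ_{y g_y⁻¹} g_y) f. -/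
/-- A rack envelope over `G` (with orbit representatives `R`), given as a function on `X`
whose values at `R` form the envelope data. -/
def IsRackEnvelopeFun {X : Type*} (G : Subgroup (Equiv.Perm X)) (R : Set X)
    (Λ : X → Equiv.Perm X) : Prop :=
  (∀ x ∈ R, Λ x ∈ cgStab G x) ∧
  Subgroup.closure (⋃ x ∈ R, conjClassOf G (Λ x)) = G

/-!
Since each `λ_x` centralizes `G_x`, the left translations of an envelope rack are
`G`-equivariant, `L_{g u} = g L_u g⁻¹`, and they restrict to `λ` on the transversal; hence they
are exactly the conjugates of the `λ_x` and generate `G`. A rack isomorphism `f` conjugates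
`L^λ_u` to `L^κ_{f u}`, so it maps one generating set of `G` onto the other and normalizes `G`;
evaluating at the transversal gives the formula for `κ`. Conversely, for `f` normalizing `G`
both `u ↦ f L^λ_{f⁻¹ u} f⁻¹` and `u ↦ L^κ_u` are `G`-equivariant, so agreeing on the
transversal they agree everywhere.
-/

open Equiv Subgroup

section ConjEquivariant

variable {X : Type*} {G : Subgroup (Perm X)} {R : Set X}

theorem IsTransversal.eq_of_smul_eq (hR : IsTransversal G R) {x₁ x₂ : X} (h₁ : x₁ ∈ R)
    (h₂ : x₂ ∈ R) {g : Perm X} (hg : g ∈ G) (hgx : g • x₁ = x₂) : x₁ = x₂ :=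
  (hR x₁).unique ⟨h₁, 1, one_mem _, one_smul _ _⟩ ⟨h₂, g, hg, hgx⟩

def ConjEquivariant (G : Subgroup (Perm X)) (F : X → Perm X) : Prop :=
  ∀ g ∈ G, ∀ u, F (g • u) = g * F u * g⁻¹

theorem ConjEquivariant.eq_of_eqOn (hR : IsTransversal G R) {F₁ F₂ : X → Perm X}
    (h₁ : ConjEquivariant G F₁) (h₂ : ConjEquivariant G F₂) (h : Set.EqOn F₁ F₂ R) :
    F₁ = F₂ := by
  funext u
  obtain ⟨x, ⟨hx, g, hg, rfl⟩, -⟩ := hR u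
  rw [← inv_smul_smul g u, h₁ _ (inv_mem hg), h₂ _ (inv_mem hg), h hx]

theorem ConjEquivariant.conj {F : X → Perm X} (hF : ConjEquivariant G F) {f : Perm X}
    (hf : f ∈ normalizer (G : Set (Perm X))) :
    ConjEquivariant G fun u ↦ f * F (f⁻¹ • u) * f⁻¹ := by
  intro g hg u
  have hg' : f⁻¹ * g * f ∈ G := by simpa using (mem_normalizer_iff.mp (inv_mem hf) g).mp hg
  have hu : f⁻¹ • g • u = (f⁻¹ * g * f) • f⁻¹ • u := by simp [mul_smul]
  simp only [hu, hF _ hg']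
  group

end ConjEquivariant

theorem Equiv.Perm.mul_mul_inv_eq_iff_apply {X : Type*} {f a b : Perm X} :
    f * a * f⁻¹ = b ↔ ∀ v, f (a v) = b (f v) := by
  rw [mul_inv_eq_iff_eq_mul, Perm.ext_iff]
  rfl

section Envelope

variable {X : Type*} {G : Subgroup (Perm X)} {R : Set X} {gsel Λ : X → Perm X}

/-- The left translation `L_u = g_u⁻¹ λ_{u g_u⁻¹} g_u` of the rack of the envelope `(G, Λ)`,
in left-action convention. -/
def envelopeTranslation (gsel Λ : X → Perm X) (u : X) : Perm X :=
  gsel u * Λ ((gsel u)⁻¹ • u) * (gsel u)⁻¹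

theorem commute_of_mem_cgStab {a h : Perm X} {x : X} (ha : a ∈ cgStab G x) (hh : h ∈ G)
    (hx : h • x = x) : Commute h a :=
  mem_centralizer_iff.mp ha.2 h ⟨hh, hx⟩

theorem conjEquivariant_envelopeTranslation (hR : IsTransversal G R)
    (hgG : ∀ y, gsel y ∈ G) (hgR : ∀ y, (gsel y)⁻¹ • y ∈ R) (hΛ : ∀ x ∈ R, Λ x ∈ cgStab G x) :
    ConjEquivariant G (envelopeTranslation gsel Λ) := by
  intro g hg u
  set k := (gsel (g • u))⁻¹ * g * gsel u
  have hk : k ∈ G := mul_mem (mul_mem (inv_mem (hgG _)) hg) (hgG u)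
  have hku : k • (gsel u)⁻¹ • u = (gsel (g • u))⁻¹ • g • u := by simp [k, mul_smul]
  have hrep := hR.eq_of_smul_eq (hgR u) (hgR _) hk hku
  have hc : Commute k (Λ ((gsel u)⁻¹ • u)) :=
    commute_of_mem_cgStab (hΛ _ (hgR u)) hk (hku.trans hrep.symm)
  unfold envelopeTranslation
  rw [← hrep]
  calc _ = gsel (g • u) * (k * Λ ((gsel u)⁻¹ • u) * k⁻¹) * (gsel (g • u))⁻¹ := by
        rw [hc.eq, mul_inv_cancel_right]
    _ = _ := by simp only [k]; group

theorem envelopeTranslation_of_mem (hR : IsTransversal G R) (hgG : ∀ y, gsel y ∈ G)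
    (hgR : ∀ y, (gsel y)⁻¹ • y ∈ R) (hΛ : ∀ x ∈ R, Λ x ∈ cgStab G x) {x : X} (hx : x ∈ R) :
    envelopeTranslation gsel Λ x = Λ x := by
  have hrep : (gsel x)⁻¹ • x = x := hR.eq_of_smul_eq (hgR x) hx (hgG x) (smul_inv_smul _ _)
  have hc : Commute (gsel x) (Λ x) :=
    commute_of_mem_cgStab (hΛ x hx) (hgG x) (inv_smul_eq_iff.mp hrep).symm
  rw [envelopeTranslation, hrep, hc.eq, mul_inv_cancel_right]

theorem range_envelopeTranslation (hR : IsTransversal G R) (hgG : ∀ y, gsel y ∈ G)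
    (hgR : ∀ y, (gsel y)⁻¹ • y ∈ R) (hΛ : ∀ x ∈ R, Λ x ∈ cgStab G x) :
    Set.range (envelopeTranslation gsel Λ) = ⋃ x ∈ R, conjClassOf G (Λ x) := by
  ext a
  simp only [Set.mem_range, Set.mem_iUnion, conjClassOf, Set.mem_ofPred_eq]
  constructor
  · rintro ⟨u, rfl⟩
    exact ⟨_, hgR u, gsel u, hgG u, rfl⟩
  · rintro ⟨x, hx, g, hg, rfl⟩
    refine ⟨g • x, ?_⟩
    rw [conjEquivariant_envelopeTranslation hR hgG hgR hΛ g hg,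
      envelopeTranslation_of_mem hR hgG hgR hΛ hx]

theorem closure_range_envelopeTranslation (hR : IsTransversal G R) (hgG : ∀ y, gsel y ∈ G)
    (hgR : ∀ y, (gsel y)⁻¹ • y ∈ R) (hΛ : IsRackEnvelopeFun G R Λ) :
    closure (Set.range (envelopeTranslation gsel Λ)) = G := by
  rw [range_envelopeTranslation hR hgG hgR hΛ.1, hΛ.2]

theorem mem_normalizer_of_conj_envelopeTranslation {κ : X → Perm X} (hR : IsTransversal G R)
    (hgG : ∀ y, gsel y ∈ G) (hgR : ∀ y, (gsel y)⁻¹ • y ∈ R) (hΛ : IsRackEnvelopeFun G R Λ)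
    (hκ : IsRackEnvelopeFun G R κ) {f : Perm X}
    (hf : ∀ u, f * envelopeTranslation gsel Λ u * f⁻¹ = envelopeTranslation gsel κ (f u)) :
    f ∈ normalizer (G : Set (Perm X)) := by
  have himage : MulAut.conj f '' Set.range (envelopeTranslation gsel Λ) =
      Set.range (envelopeTranslation gsel κ) := by
    rw [← Set.range_comp, ← f.surjective.range_comp (envelopeTranslation gsel κ)]
    exact congrArg Set.range (funext hf)
  rw [mem_normalizer_iff_map_conj_eq]
  calc G.map (MulAut.conj f) = (closure (Set.range (envelopeTranslation gsel Λ))).map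
        (MulAut.conj f) := by rw [closure_range_envelopeTranslation hR hgG hgR hΛ]
    _ = G := by
      rw [MonoidHom.map_closure, MonoidHom.coe_coe, himage,
        closure_range_envelopeTranslation hR hgG hgR hκ]

end Envelope

/-- Proposition `Pr:Iso`: let `(G,(λ_x))` and `(G,(κ_x))` be rack envelopes
and for every `y ∈ X` fix `g_y ∈ G` carrying the orbit representative `y g_y⁻¹ ∈ R` to
`y`.  The corresponding racks (whose left translations are `L_y = g_y⁻¹ λ_{y g_y⁻¹} g_y`,
written below in left-action convention) are isomorphic if and only if there is
`f ∈ N_{S_X}(G)` with `κ_x = ((λ_{y g_y⁻¹})^{g_y})^f` for every `x ∈ R`, where `y = xf⁻¹`. -/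
theorem envelope_iso_criterion {X : Type*} (G : Subgroup (Equiv.Perm X)) (R : Set X)
    (hR : IsTransversal G R) (gsel : X → Equiv.Perm X)
    (hgG : ∀ y : X, gsel y ∈ G) (hgR : ∀ y : X, (gsel y)⁻¹ • y ∈ R)
    (Λ κ : X → Equiv.Perm X)
    (hΛ : IsRackEnvelopeFun G R Λ) (hκ : IsRackEnvelopeFun G R κ) :
    (∃ f : Equiv.Perm X, ∀ u v : X,
        f ((gsel u * Λ ((gsel u)⁻¹ • u) * (gsel u)⁻¹) v) =
          (gsel (f u) * κ ((gsel (f u))⁻¹ • (f u)) * (gsel (f u))⁻¹) (f v)) ↔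
    (∃ f ∈ Subgroup.normalizer (G : Set (Equiv.Perm X)), ∀ x ∈ R,
        κ x = f * (gsel (f⁻¹ • x) * Λ ((gsel (f⁻¹ • x))⁻¹ • (f⁻¹ • x)) *
          (gsel (f⁻¹ • x))⁻¹) * f⁻¹) := by
  constructor
  · rintro ⟨f, hf⟩
    have hconj : ∀ u, f * envelopeTranslation gsel Λ u * f⁻¹ = envelopeTranslation gsel κ (f u) :=
      fun u ↦ Perm.mul_mul_inv_eq_iff_apply.mpr (hf u)
    refine ⟨f, mem_normalizer_of_conj_envelopeTranslation hR hgG hgR hΛ hκ hconj, fun x hx ↦ ?_⟩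
    calc κ x = envelopeTranslation gsel κ (f (f⁻¹ • x)) := by
          rw [← Perm.smul_def, smul_inv_smul, envelopeTranslation_of_mem hR hgG hgR hκ.1 hx]
      _ = _ := (hconj _).symm
  · rintro ⟨f, hfN, hfR⟩
    have hagree : (fun u ↦ f * envelopeTranslation gsel Λ (f⁻¹ • u) * f⁻¹) =
        envelopeTranslation gsel κ := by
      refine ((conjEquivariant_envelopeTranslation hR hgG hgR hΛ.1).conj hfN).eq_of_eqOn hR
        (conjEquivariant_envelopeTranslation hR hgG hgR hκ.1) fun x hx ↦ ?_
      rw [envelopeTranslation_of_mem hR hgG hgR hκ.1 hx]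
      exact (hfR x hx).symm
    refine ⟨f, fun u ↦ Perm.mul_mul_inv_eq_iff_apply.mp ?_⟩
    have hu := congrFun hagree (f • u)
    rwa [inv_smul_smul] at hu
end

section
/- Let X be a nonempty set, G ≤ S_X and F = N_{S_X}(G). Define, for f ∈ F and a rack folder (λ_x : x ∈ X/G), the tuple (λ_x : x ∈ X/G)·f = (κ_x : x ∈ X/G) where κ_x = f⁻¹ (g_y⁻¹ λ_{y g_y⁻¹} g_y) f with y = xf⁻¹ and g_y ∈ G a fixed element with (y g_y⁻¹) g_y = y and y g_y⁻¹ ∈ X/G. Then this defines a group action of F on the set Fol_r(G) of rack folders over G, and this action restricts to actions on the set of quandle folders, the set of rack envelopes, and the set of quandle envelopes over G. -/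
/-- A rack folder over `G`: a tuple `(λ_x : x ∈ R)` with `λ_x ∈ C_G(G_x)`. -/
def IsRackFolder {X : Type*} (G : Subgroup (Equiv.Perm X)) (R : Set X)
    (Λ : R → Equiv.Perm X) : Prop :=
  ∀ x : R, Λ x ∈ cgStab G (x : X)

/-- A quandle folder over `G`: a tuple `(λ_x : x ∈ R)` with `λ_x ∈ Z(G_x)`. -/
def IsQuandleFolder {X : Type*} (G : Subgroup (Equiv.Perm X)) (R : Set X)
    (Λ : R → Equiv.Perm X) : Prop :=
  ∀ x : R, Λ x ∈ zStab G (x : X)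

/-- The envelope condition: `⟨⋃_{x ∈ R} λ_x^G⟩ = G`. -/
def GeneratesG {X : Type*} (G : Subgroup (Equiv.Perm X)) (R : Set X)
    (Λ : R → Equiv.Perm X) : Prop :=
  Subgroup.closure (⋃ x : R, conjClassOf G (Λ x)) = G

/-- The action of `f ∈ N_{S_X}(G)` on tuples `(λ_x : x ∈ R)`:
`(Λ·f)_x = ((λ_{y g_y⁻¹})^{g_y})^f` with `y = xf⁻¹`, written in left-action convention.
Here `gsel y = g_y ∈ G` is a fixed element with `(y g_y⁻¹) g_y = y` and `y g_y⁻¹ ∈ R`. -/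
def folderAct {X : Type*} (R : Set X) (gsel : X → Equiv.Perm X)
    (hgR : ∀ y : X, (gsel y)⁻¹ • y ∈ R)
    (Λ : R → Equiv.Perm X) (f : Equiv.Perm X) : R → Equiv.Perm X :=
  fun x =>
    f * (gsel (f⁻¹ • (x : X)) *
        Λ ⟨(gsel (f⁻¹ • (x : X)))⁻¹ • (f⁻¹ • (x : X)), hgR _⟩ *
        (gsel (f⁻¹ • (x : X)))⁻¹) * f⁻¹

/-!
In left-action notation, `(Λ·f)_x = c λ_r c⁻¹` with `c = f g_y`, `y = f⁻¹ x` and `r = g_y⁻¹ y ∈ R`.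
This value does not depend on the choices made: for every `c ∈ fG` and `r ∈ R` with `c r = x`
it equals `c λ_r c⁻¹`, since two such `c` differ by an element of `G_r`, which commutes with
`λ_r ∈ C_G(G_r)`. The action laws follow by choosing `c` suitably. Conjugation by `f g_y`, an
element of the normalizer, carries `C_G(G_r)` and `Z(G_r)` onto `C_G(G_x)` and `Z(G_x)`, and
the conjugacy classes of the new folder are the `f`-conjugates of the old ones, so they
generate `f G f⁻¹ = G`.
-/

open Equiv Subgroup

section Conjugation

variable {X : Type*} {G : Subgroup (Perm X)} {a c : Perm X} {r : X}

lemma conj_mem_of_mem_normalizer (hc : c ∈ normalizer (G : Set (Perm X))) (ha : a ∈ G) :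
    c * a * c⁻¹ ∈ G :=
  (mem_normalizer_iff.mp hc a).mp ha

lemma inv_conj_mem_of_mem_normalizer (hc : c ∈ normalizer (G : Set (Perm X))) (ha : a ∈ G) :
    c⁻¹ * a * c ∈ G := by
  simpa using conj_mem_of_mem_normalizer (inv_mem hc) ha

lemma conj_mem_stabIn (hc : c ∈ normalizer (G : Set (Perm X))) (ha : a ∈ stabIn G r) :
    c * a * c⁻¹ ∈ stabIn G (c • r) := by
  refine ⟨conj_mem_of_mem_normalizer hc ha.1, ?_⟩
  have har : a • r = r := ha.2
  simp [MulAction.mem_stabilizer_iff, mul_smul, har]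

lemma conj_mem_centralizer_stabIn (hc : c ∈ normalizer (G : Set (Perm X)))
    (ha : a ∈ centralizer (stabIn G r : Set (Perm X))) :
    c * a * c⁻¹ ∈ centralizer (stabIn G (c • r) : Set (Perm X)) := by
  rw [mem_centralizer_iff]
  intro b hb
  have hb' : c⁻¹ * b * c ∈ stabIn G r := by
    simpa using conj_mem_stabIn (inv_mem hc) hb
  have hcomm : c⁻¹ * b * c * a = a * (c⁻¹ * b * c) := mem_centralizer_iff.mp ha _ hb'
  calc b * (c * a * c⁻¹) = c * (c⁻¹ * b * c * a) * c⁻¹ := by group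
    _ = c * (a * (c⁻¹ * b * c)) * c⁻¹ := by rw [hcomm]
    _ = c * a * c⁻¹ * b := by group

lemma conj_mem_cgStab (hc : c ∈ normalizer (G : Set (Perm X))) (ha : a ∈ cgStab G r) :
    c * a * c⁻¹ ∈ cgStab G (c • r) :=
  ⟨conj_mem_of_mem_normalizer hc ha.1, conj_mem_centralizer_stabIn hc ha.2⟩

lemma conj_mem_zStab (hc : c ∈ normalizer (G : Set (Perm X))) (ha : a ∈ zStab G r) :
    c * a * c⁻¹ ∈ zStab G (c • r) :=
  ⟨conj_mem_stabIn hc ha.1, conj_mem_centralizer_stabIn hc ha.2⟩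

lemma conj_eq_conj_of_smul_eq_s14 (ha : a ∈ centralizer (stabIn G r : Set (Perm X)))
    {h k : Perm X} (hkh : k⁻¹ * h ∈ G) (hr : h • r = k • r) :
    h * a * h⁻¹ = k * a * k⁻¹ := by
  have hstab : k⁻¹ * h ∈ stabIn G r :=
    ⟨hkh, by simp [MulAction.mem_stabilizer_iff, mul_smul, hr]⟩
  have hcomm : k⁻¹ * h * a = a * (k⁻¹ * h) := mem_centralizer_iff.mp ha _ hstab
  calc h * a * h⁻¹ = k * (k⁻¹ * h * a) * h⁻¹ := by group
    _ = k * (a * (k⁻¹ * h)) * h⁻¹ := by rw [hcomm]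
    _ = k * a * k⁻¹ := by group

lemma conjClassOf_conj_of_mem (hc : c ∈ G) : conjClassOf G (c * a * c⁻¹) = conjClassOf G a := by
  ext b
  constructor
  · rintro ⟨g, hg, rfl⟩
    exact ⟨g * c, mul_mem hg hc, by group⟩
  · rintro ⟨g, hg, rfl⟩
    exact ⟨g * c⁻¹, mul_mem hg (inv_mem hc), by group⟩

lemma conjClassOf_conj_of_mem_normalizer (hc : c ∈ normalizer (G : Set (Perm X))) :
    conjClassOf G (c * a * c⁻¹) = MulAut.conj c '' conjClassOf G a := by
  ext b
  simp only [conjClassOf, Set.mem_image, Set.mem_ofPred_eq, MulAut.conj_apply]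
  constructor
  · rintro ⟨g, hg, rfl⟩
    exact ⟨_, ⟨c⁻¹ * g * c, inv_conj_mem_of_mem_normalizer hc hg, rfl⟩, by group⟩
  · rintro ⟨_, ⟨g, hg, rfl⟩, rfl⟩
    exact ⟨c * g * c⁻¹, conj_mem_of_mem_normalizer hc hg, by group⟩

end Conjugation

lemma IsTransversal.eq_of_smul_eq_s14 {X : Type*} {G : Subgroup (Perm X)} {R : Set X}
    (hR : IsTransversal G R) {r r' : X} (hr : r ∈ R) (hr' : r' ∈ R) {g : Perm X} (hg : g ∈ G)
    (h : g • r = r') : r = r' :=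
  (hR r).unique ⟨hr, 1, one_mem G, one_smul _ r⟩ ⟨hr', g, hg, h⟩

section FolderAct

variable {X : Type*} {G : Subgroup (Perm X)} {R : Set X} {gsel : X → Perm X}
  (hgG : ∀ y : X, gsel y ∈ G) (hgR : ∀ y : X, (gsel y)⁻¹ • y ∈ R)
  {Λ : R → Perm X} {f : Perm X}

include hgG

lemma folderAct_apply_mem {P : X → Subgroup (Perm X)}
    (hP : ∀ c r a, c ∈ normalizer (G : Set (Perm X)) → a ∈ P r → c * a * c⁻¹ ∈ P (c • r))
    (hΛ : ∀ x : R, Λ x ∈ P x) (hf : f ∈ normalizer (G : Set (Perm X))) (x : R) :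
    folderAct R gsel hgR Λ f x ∈ P x := by
  set g := gsel (f⁻¹ • (x : X))
  have hfg : f * g ∈ normalizer (G : Set (Perm X)) := mul_mem hf (le_normalizer (hgG _))
  have hx : (f * g) • (g⁻¹ • f⁻¹ • (x : X)) = x := by simp [mul_smul]
  have key := hP _ _ _ hfg (hΛ ⟨g⁻¹ • f⁻¹ • (x : X), hgR _⟩)
  rw [hx] at key
  convert key using 1
  simp only [folderAct, mul_inv_rev, mul_assoc, g]

lemma isRackFolder_folderAct (hΛ : IsRackFolder G R Λ)
    (hf : f ∈ normalizer (G : Set (Perm X))) : IsRackFolder G R (folderAct R gsel hgR Λ f) :=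
  folderAct_apply_mem hgG hgR (fun _ _ _ hc ha ↦ conj_mem_cgStab hc ha) hΛ hf

lemma isQuandleFolder_folderAct (hΛ : IsQuandleFolder G R Λ)
    (hf : f ∈ normalizer (G : Set (Perm X))) : IsQuandleFolder G R (folderAct R gsel hgR Λ f) :=
  folderAct_apply_mem hgG hgR (fun _ _ _ hc ha ↦ conj_mem_zStab hc ha) hΛ hf

lemma folderAct_apply_eq_conj (hR : IsTransversal G R) (hΛ : IsRackFolder G R Λ) (x r : R)
    {c : Perm X} (hc : f⁻¹ * c ∈ G) (hcr : c • (r : X) = x) :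
    folderAct R gsel hgR Λ f x = c * Λ r * c⁻¹ := by
  set g := gsel (f⁻¹ • (x : X))
  have hrep : (⟨g⁻¹ • f⁻¹ • (x : X), hgR _⟩ : R) = r := by
    have hg : g⁻¹ * (f⁻¹ * c) ∈ G := mul_mem (inv_mem (hgG _)) hc
    exact Subtype.ext (hR.eq_of_smul_eq_s14 r.2 (hgR _) hg (by simp [mul_smul, hcr, g])).symm
  have hrx : (f * g) • (r : X) = x := by
    rw [← hrep]
    simp [mul_smul]
  have hconj : (f * g) * Λ r * (f * g)⁻¹ = c * Λ r * c⁻¹ :=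
    conj_eq_conj_of_smul_eq_s14 (hΛ r).2 (by simpa [mul_assoc] using mul_mem (inv_mem hc) (hgG _))
      (hrx.trans hcr.symm)
  rw [← hconj]
  simp only [folderAct, hrep, mul_inv_rev, mul_assoc, g]

lemma folderAct_one (hR : IsTransversal G R) (hΛ : IsRackFolder G R Λ) :
    folderAct R gsel hgR Λ 1 = Λ := by
  funext x
  simpa using folderAct_apply_eq_conj hgG hgR hR hΛ x x (c := 1) (by simp [one_mem]) rfl

lemma folderAct_mul (hR : IsTransversal G R) (hΛ : IsRackFolder G R Λ) {f₁ f₂ : Perm X}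
    (hf₂ : f₂ ∈ normalizer (G : Set (Perm X))) :
    folderAct R gsel hgR Λ (f₁ * f₂) = folderAct R gsel hgR (folderAct R gsel hgR Λ f₂) f₁ := by
  funext x
  set g₁ := gsel (f₁⁻¹ • (x : X))
  set y₂ := f₂⁻¹ • g₁⁻¹ • f₁⁻¹ • (x : X)
  set g₂ := gsel y₂
  have hc : (f₁ * f₂)⁻¹ * (f₁ * g₁ * f₂ * g₂) ∈ G := by
    simpa [mul_assoc] using mul_mem (inv_conj_mem_of_mem_normalizer hf₂ (hgG _)) (hgG y₂)
  rw [folderAct_apply_eq_conj hgG hgR hR hΛ x ⟨g₂⁻¹ • y₂, hgR y₂⟩ hc (by simp [mul_smul, y₂])]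
  simp only [folderAct, g₁, g₂, y₂]
  group

lemma surjective_folderAct_index (hR : IsTransversal G R)
    (hf : f ∈ normalizer (G : Set (Perm X))) :
    Function.Surjective fun x : R ↦
      (⟨(gsel (f⁻¹ • (x : X)))⁻¹ • f⁻¹ • (x : X), hgR _⟩ : R) := by
  intro r
  set g := gsel (f • (r : X))
  set x : X := g⁻¹ • f • (r : X)
  refine ⟨⟨x, hgR _⟩, Subtype.ext ?_⟩
  have hg : (gsel (f⁻¹ • x))⁻¹ * (f⁻¹ * g⁻¹ * f) ∈ G :=
    mul_mem (inv_mem (hgG _)) (inv_conj_mem_of_mem_normalizer hf (inv_mem (hgG _)))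
  exact (hR.eq_of_smul_eq_s14 r.2 (hgR _) hg (by simp [mul_smul, x])).symm

lemma iUnion_conjClassOf_folderAct (hR : IsTransversal G R)
    (hf : f ∈ normalizer (G : Set (Perm X))) :
    ⋃ x : R, conjClassOf G (folderAct R gsel hgR Λ f x) =
      MulAut.conj f '' ⋃ r : R, conjClassOf G (Λ r) := by
  rw [Set.image_iUnion, ← (surjective_folderAct_index hgG hgR hR hf).iUnion_comp
    fun r ↦ MulAut.conj f '' conjClassOf G (Λ r)]
  refine Set.iUnion_congr fun x ↦ ?_
  rw [folderAct, conjClassOf_conj_of_mem_normalizer hf, conjClassOf_conj_of_mem (hgG _)]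

lemma generatesG_folderAct (hR : IsTransversal G R) (hgen : GeneratesG G R Λ)
    (hf : f ∈ normalizer (G : Set (Perm X))) : GeneratesG G R (folderAct R gsel hgR Λ f) := by
  rw [GeneratesG, iUnion_conjClassOf_folderAct hgG hgR hR hf, ← MonoidHom.coe_coe,
    ← MonoidHom.map_closure, hgen, mem_normalizer_iff_map_conj_eq.mp hf]

end FolderAct

theorem normalizer_action_on_folders_general {X : Type*}
    (G : Subgroup (Equiv.Perm X)) (R : Set X) (hR : IsTransversal G R)
    (gsel : X → Equiv.Perm X) (hgG : ∀ y : X, gsel y ∈ G)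
    (hgR : ∀ y : X, (gsel y)⁻¹ • y ∈ R) :
    -- the action preserves rack folders
    (∀ Λ : R → Equiv.Perm X, IsRackFolder G R Λ → ∀ f ∈ Subgroup.normalizer (G : Set (Equiv.Perm X)),
        IsRackFolder G R (folderAct R gsel hgR Λ f)) ∧
    -- the action preserves quandle folders
    (∀ Λ : R → Equiv.Perm X, IsQuandleFolder G R Λ → ∀ f ∈ Subgroup.normalizer (G : Set (Equiv.Perm X)),
        IsQuandleFolder G R (folderAct R gsel hgR Λ f)) ∧
    -- the action preserves rack envelopes
    (∀ Λ : R → Equiv.Perm X, IsRackFolder G R Λ → GeneratesG G R Λ → ∀ f ∈ Subgroup.normalizer (G : Set (Equiv.Perm X)),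
        IsRackFolder G R (folderAct R gsel hgR Λ f) ∧
          GeneratesG G R (folderAct R gsel hgR Λ f)) ∧
    -- the action preserves quandle envelopes
    (∀ Λ : R → Equiv.Perm X, IsQuandleFolder G R Λ → GeneratesG G R Λ → ∀ f ∈ Subgroup.normalizer (G : Set (Equiv.Perm X)),
        IsQuandleFolder G R (folderAct R gsel hgR Λ f) ∧
          GeneratesG G R (folderAct R gsel hgR Λ f)) ∧
    -- identity law on folders
    (∀ Λ : R → Equiv.Perm X, IsRackFolder G R Λ → folderAct R gsel hgR Λ 1 = Λ) ∧
    -- compatibility law on folders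
    (∀ Λ : R → Equiv.Perm X, IsRackFolder G R Λ → ∀ f₁ ∈ Subgroup.normalizer (G : Set (Equiv.Perm X)), ∀ f₂ ∈ Subgroup.normalizer (G : Set (Equiv.Perm X)),
        folderAct R gsel hgR Λ (f₁ * f₂) =
          folderAct R gsel hgR (folderAct R gsel hgR Λ f₂) f₁) :=
  ⟨fun _ hΛ _ hf ↦ isRackFolder_folderAct hgG hgR hΛ hf,
    fun _ hΛ _ hf ↦ isQuandleFolder_folderAct hgG hgR hΛ hf,
    fun _ hΛ hgen _ hf ↦
      ⟨isRackFolder_folderAct hgG hgR hΛ hf, generatesG_folderAct hgG hgR hR hgen hf⟩,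
    fun _ hΛ hgen _ hf ↦
      ⟨isQuandleFolder_folderAct hgG hgR hΛ hf, generatesG_folderAct hgG hgR hR hgen hf⟩,
    fun _ hΛ ↦ folderAct_one hgG hgR hR hΛ,
    fun _ hΛ _ _ _ hf₂ ↦ folderAct_mul hgG hgR hR hΛ hf₂⟩

/-- Theorem `Th:Action`(i): the formula above defines a group action of
`F = N_{S_X}(G)` on the set of rack folders over `G`, and this action restricts to the
sets of quandle folders, rack envelopes and quandle envelopes over `G`. -/
theorem normalizer_action_on_folders {X : Type*} [Nonempty X]
    (G : Subgroup (Equiv.Perm X)) (R : Set X) (hR : IsTransversal G R)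
    (gsel : X → Equiv.Perm X) (hgG : ∀ y : X, gsel y ∈ G)
    (hgR : ∀ y : X, (gsel y)⁻¹ • y ∈ R) :
    -- the action preserves rack folders
    (∀ Λ : R → Equiv.Perm X, IsRackFolder G R Λ → ∀ f ∈ Subgroup.normalizer (G : Set (Equiv.Perm X)),
        IsRackFolder G R (folderAct R gsel hgR Λ f)) ∧
    -- the action preserves quandle folders
    (∀ Λ : R → Equiv.Perm X, IsQuandleFolder G R Λ → ∀ f ∈ Subgroup.normalizer (G : Set (Equiv.Perm X)),
        IsQuandleFolder G R (folderAct R gsel hgR Λ f)) ∧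
    -- the action preserves rack envelopes
    (∀ Λ : R → Equiv.Perm X, IsRackFolder G R Λ → GeneratesG G R Λ → ∀ f ∈ Subgroup.normalizer (G : Set (Equiv.Perm X)),
        IsRackFolder G R (folderAct R gsel hgR Λ f) ∧
          GeneratesG G R (folderAct R gsel hgR Λ f)) ∧
    -- the action preserves quandle envelopes
    (∀ Λ : R → Equiv.Perm X, IsQuandleFolder G R Λ → GeneratesG G R Λ → ∀ f ∈ Subgroup.normalizer (G : Set (Equiv.Perm X)),
        IsQuandleFolder G R (folderAct R gsel hgR Λ f) ∧
          GeneratesG G R (folderAct R gsel hgR Λ f)) ∧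
    -- identity law on folders
    (∀ Λ : R → Equiv.Perm X, IsRackFolder G R Λ → folderAct R gsel hgR Λ 1 = Λ) ∧
    -- compatibility law on folders
    (∀ Λ : R → Equiv.Perm X, IsRackFolder G R Λ → ∀ f₁ ∈ Subgroup.normalizer (G : Set (Equiv.Perm X)), ∀ f₂ ∈ Subgroup.normalizer (G : Set (Equiv.Perm X)),
        folderAct R gsel hgR Λ (f₁ * f₂) =
          folderAct R gsel hgR (folderAct R gsel hgR Λ f₂) f₁) :=
  normalizer_action_on_folders_general G R hR gsel hgG hgR
end

section
/- Let G ≤ S_X. If G is rack admissible, i.e., there exists a rack (X,*) with Lmlt(X,*) = G, then G is generated by the union over x ∈ X/G of the sets (C_G(G_x))^G = { g⁻¹ c g : c ∈ C_G(G_x), g ∈ G }. -/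
section Aux
variable {X : Type*}

lemma RackStr.L_apply (Q : RackStr X) (x y : X) : Q.L x y = Q.op x y := rfl

lemma RackStr.L_mul (Q : RackStr X) (x y : X) :
    Q.L x * Q.L y = Q.L (Q.op x y) * Q.L x := by
  ext z
  simp only [Equiv.Perm.mul_apply, RackStr.L_apply]
  exact Q.self_distrib x y z

lemma RackStr.conj_L (Q : RackStr X) {g : Equiv.Perm X} (hg : g ∈ Q.lmlt) (y : X) :
    g * Q.L y * g⁻¹ = Q.L (g y) := by
  revert y
  refine Subgroup.closure_induction (k := Set.range Q.L) ?_ ?_ ?_ ?_ hg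
  · rintro _ ⟨x, rfl⟩ y
    have := Q.L_mul x y
    rw [eq_comm, ← eq_mul_inv_iff_mul_eq] at this
    rw [mul_assoc] at this ⊢
    simpa [RackStr.L_apply] using this.symm
  · intro y; simp
  · intro a b _ _ ha hb y
    have : a * b * Q.L y * (a * b)⁻¹ = a * (b * Q.L y * b⁻¹) * a⁻¹ := by
      group
    rw [this, hb y, ha (b y)]
    rfl
  · intro a _ ha y
    have h2 := ha (a⁻¹ y)
    have : Q.L (a (a⁻¹ y)) = Q.L y := by simp
    rw [this] at h2
    rw [← h2]
    group

end Aux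

/-- Proposition `Pr:Admissible`, rack case: if `G ≤ S_X` is rack admissible
(there is a rack `(X,*)` with `Lmlt(X,*) = G`), then `G` is generated by the union over
`x ∈ X/G` of the sets `(C_G(G_x))^G = { g⁻¹ c g : c ∈ C_G(G_x), g ∈ G }` (written below in
left-action convention). -/
theorem rack_admissible_generates {X : Type*} (G : Subgroup (Equiv.Perm X)) (R : Set X)
    (hR : IsTransversal G R) (h : ∃ Q : RackStr X, Q.lmlt = G) :
    Subgroup.closure
      (⋃ x ∈ R, {h : Equiv.Perm X | ∃ c ∈ cgStab G x, ∃ g ∈ G, h = g * c * g⁻¹}) = G := by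
  obtain ⟨Q, rfl⟩ := h
  set G := Q.lmlt with hG
  apply le_antisymm
  · rw [Subgroup.closure_le]
    rintro p hp
    simp only [Set.mem_iUnion] at hp
    obtain ⟨x, -, c, hc, g, hg, rfl⟩ := hp
    exact mul_mem (mul_mem hg hc.1) (inv_mem hg)
  · rw [hG, RackStr.lmlt, Subgroup.closure_le]
    rintro _ ⟨y, rfl⟩
    obtain ⟨x, ⟨hxR, g, hg, hgy⟩, -⟩ := hR y
    have hLy : Q.L y ∈ G := by
      rw [hG]; exact Subgroup.subset_closure ⟨y, rfl⟩
    have hLx : Q.L x ∈ G := by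
      rw [hG]; exact Subgroup.subset_closure ⟨x, rfl⟩
    have hconj : g * Q.L y * g⁻¹ = Q.L x := by
      rw [Q.conj_L hg y]
      exact congrArg Q.L hgy
    have hcent2 : Q.L x ∈ Subgroup.centralizer (stabIn G x : Set (Equiv.Perm X)) := by
      rw [Subgroup.mem_centralizer_iff]
      rintro h ⟨hhG, hhx⟩
      have hfix : h x = x := hhx
      have := Q.conj_L hhG x
      rw [hfix] at this
      have := mul_inv_eq_iff_eq_mul.mp this
      rw [this]
    have hcent : Q.L x ∈ cgStab G x := Subgroup.mem_inf.mpr ⟨hLx, hcent2⟩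
    apply Subgroup.subset_closure
    simp only [Set.mem_iUnion]
    refine ⟨x, hxR, Q.L x, hcent, g⁻¹, inv_mem hg, ?_⟩
    rw [← hconj]
    group
end

section
/- Let X be a set with |X| ≥ 4. Then there is no rack (X,*) whose left multiplication group Lmlt(X,*) equals the full symmetric group S_X. -/
/-! Self-distributivity says `L_x L_y L_x⁻¹ = L_{x*y}`, hence `g L_y g⁻¹ = L_{g y}` for every
`g ∈ Lmlt(X)`, so `L_x` centralizes the stabilizer of `x` in `Lmlt(X)`. If `Lmlt(X) = S_X`, that
stabilizer is `Sym(X ∖ {x})`, whose centralizer in `S_X` is trivial once `|X| ≥ 4`. Then every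
`L_x` is trivial, so `Lmlt(X) = 1 ≠ S_X`. -/

lemma exists_ne_ne_ne_of_four_le_mk {X : Type*} (h : 4 ≤ Cardinal.mk X) (a b c : X) :
    ∃ u : X, u ≠ a ∧ u ≠ b ∧ u ≠ c := by
  classical
  by_contra! hu
  have hcover : (Set.univ : Set X) ⊆ (({a, b, c} : Finset X) : Set X) := fun u _ => by
    simp only [Finset.coe_insert, Finset.coe_singleton, Set.mem_insert_iff, Set.mem_singleton_iff]
    tauto
  have := calc (4 : Cardinal) ≤ Cardinal.mk X := h
    _ = Cardinal.mk (Set.univ : Set X) := Cardinal.mk_univ.symm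
    _ ≤ (({a, b, c} : Finset X).card : Cardinal) :=
      (Cardinal.mk_le_mk_of_subset hcover).trans_eq Cardinal.mk_coe_finset
    _ ≤ 3 := by exact_mod_cast Finset.card_le_three
  norm_num at this

namespace Equiv.Perm

theorem centralizer_stabilizer_eq_bot {X : Type*} (h : 4 ≤ Cardinal.mk X) (x : X) :
    Subgroup.centralizer (MulAction.stabilizer (Perm X) x : Set (Perm X)) = ⊥ := by
  classical
  refine (Subgroup.eq_bot_iff_forall _).2 fun c hc => ?_
  rw [Subgroup.mem_centralizer_iff] at hc
  -- if `c y ≠ y`, the transposition `(y u)` with `u ∉ {x, y, c y}` fixes `x` but not `c`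
  have hfix : ∀ y, y ≠ x → c y = y := by
    intro y hyx
    by_contra hcy
    obtain ⟨u, hux, huy, hucy⟩ := exists_ne_ne_ne_of_four_le_mk h x y (c y)
    have hσ : swap y u ∈ MulAction.stabilizer (Perm X) x :=
      swap_apply_of_ne_of_ne (Ne.symm hyx) (Ne.symm hux)
    have := congrArg (· y) (hc _ hσ)
    simp only [mul_apply, swap_apply_left, swap_apply_of_ne_of_ne hcy (Ne.symm hucy)] at this
    exact huy (c.injective this.symm)
  ext y
  by_cases hyx : y = x
  · subst hyx
    by_contra hcy
    exact hcy (c.injective (hfix _ hcy))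
  · exact hfix y hyx

end Equiv.Perm

namespace RackStr

variable {X : Type*} (Q : RackStr X)

theorem mul_L_mul_inv_of_mem_lmlt {g : Equiv.Perm X} (hg : g ∈ Q.lmlt) (x : X) :
    g * Q.L x * g⁻¹ = Q.L (g x) := by
  induction hg using Subgroup.closure_induction generalizing x with
  | mem g hg =>
    obtain ⟨y, rfl⟩ := hg
    rw [mul_inv_eq_iff_eq_mul]
    ext z
    exact Q.self_distrib y x z
  | one => simp
  | mul g h _ _ ihg ihh =>
    rw [show g * h * Q.L x * (g * h)⁻¹ = g * (h * Q.L x * h⁻¹) * g⁻¹ by group, ihh, ihg]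
    rfl
  | inv g _ ihg =>
    have := ihg (g⁻¹ x)
    rw [Equiv.Perm.coe_inv, Equiv.apply_symm_apply] at this
    conv_lhs => rw [← this]
    simp [mul_assoc]

theorem L_mem_centralizer_stabIn (x : X) :
    Q.L x ∈ Subgroup.centralizer (stabIn Q.lmlt x : Set (Equiv.Perm X)) := by
  rw [Subgroup.mem_centralizer_iff]
  rintro g ⟨hg, hgx⟩
  rw [← mul_inv_eq_iff_eq_mul, mul_L_mul_inv_of_mem_lmlt Q hg]
  exact congrArg Q.L hgx

end RackStr

/-- if `|X| ≥ 4`, then there is no rack on `X` whose left multiplication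
group equals the full symmetric group `S_X`. -/
theorem symmetric_group_not_rack_admissible {X : Type*} (h : 4 ≤ Cardinal.mk X) :
    ¬ ∃ Q : RackStr X, Q.lmlt = (⊤ : Subgroup (Equiv.Perm X)) := by
  rintro ⟨Q, hQ⟩
  have hL : ∀ x, Q.L x = 1 := fun x => by
    have := Q.L_mem_centralizer_stabIn x
    rwa [hQ, stabIn, top_inf_eq, Equiv.Perm.centralizer_stabilizer_eq_bot h] at this
  have : Nontrivial X :=
    Cardinal.one_lt_iff_nontrivial.1 ((by norm_num : (1 : Cardinal) < 4).trans_le h)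
  have hbot : Q.lmlt = ⊥ := by
    rw [eq_bot_iff, RackStr.lmlt, Subgroup.closure_le]
    rintro _ ⟨x, rfl⟩
    exact hL x
  exact bot_ne_top (hbot ▸ hQ)
end
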